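/- Let p be a prime and A a commutative ring with p·A = 0 that is Frobenius separated. If 𝔞 ⊆ A is an ideal with 𝔞 = 𝔞² and such that there exists m ≥ 1 with x^m = 0 for all x ∈ 𝔞 (bounded nilpotence), then 𝔞 = 0. -/

import Mathlib

/-- The ideal `ker(F_R^n) = {x : R | x^(p^n) = 0}` of a ring of characteristic `p`
(realized as the ideal generated by that set). -/
def frobeniusPowerKernel (p : ℕ) (R : Type*) [CommRing R] (n : ℕ) : Ideal R :=
  Ideal.span {x : R | x ^ p ^ n = 0}

/-- A ring `R` (of characteristic `p`) is Frobenius separated if for every `n ≥ 1`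
the intersection of all powers of `ker(F_R^n)` is zero. -/
def IsFrobeniusSeparated (p : ℕ) (R : Type*) [CommRing R] : Prop :=
  ∀ n : ℕ, 1 ≤ n → (⨅ m ≥ 1, frobeniusPowerKernel p R n ^ m) = ⊥

theorem Ideal.le_frobeniusPowerKernel_of_pow_eq_zero {R : Type*} [CommRing R] {I : Ideal R}
    {p m n : ℕ} (hmn : m ≤ p ^ n) (hI : ∀ x ∈ I, x ^ m = 0) :
    I ≤ frobeniusPowerKernel p R n :=
  fun x hx => Ideal.subset_span (pow_eq_zero_of_le hmn (hI x hx))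

theorem Ideal.le_iInf_pow_of_isIdempotentElem {R : Type*} [CommSemiring R] {I J : Ideal R}
    (hI : IsIdempotentElem I) (hIJ : I ≤ J) : I ≤ ⨅ k ≥ 1, J ^ k :=
  le_iInf₂ fun k hk => calc
    I = I ^ k := (hI.pow_eq (Nat.one_le_iff_ne_zero.mp hk)).symm
    _ ≤ J ^ k := Ideal.pow_right_mono hIJ k

theorem IsFrobeniusSeparated.eq_bot_of_le_frobeniusPowerKernel {p : ℕ} {R : Type*} [CommRing R]
    (hR : IsFrobeniusSeparated p R) {n : ℕ} (hn : 1 ≤ n) {I : Ideal R}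
    (hI : IsIdempotentElem I) (hIn : I ≤ frobeniusPowerKernel p R n) : I = ⊥ :=
  le_bot_iff.mp (hR n hn ▸ Ideal.le_iInf_pow_of_isIdempotentElem hI hIn)

theorem ideal_eq_bot_of_idempotent_of_boundedNilpotent_charP_general
    (p : ℕ) (hp : p.Prime) (A : Type*) [CommRing A]
    (hA : IsFrobeniusSeparated p A)
    (𝔞 : Ideal A) (hidem : 𝔞 = 𝔞 ^ 2)
    (m : ℕ) (hbd : ∀ x ∈ 𝔞, x ^ m = 0) :
    𝔞 = ⊥ := by
  have hm : m ≤ p ^ (m + 1) := (Nat.lt_pow_self hp.one_lt).le.trans' m.le_succ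
  have h𝔞 : IsIdempotentElem 𝔞 := by rw [IsIdempotentElem, ← sq, ← hidem]
  exact hA.eq_bot_of_le_frobeniusPowerKernel m.succ_pos h𝔞
    (Ideal.le_frobeniusPowerKernel_of_pow_eq_zero hm hbd)

/-- Characteristic `p` case of Lemma C.5: in a Frobenius separated ring of
characteristic `p`, an idempotent and bounded nilpotent ideal is zero. -/
theorem ideal_eq_bot_of_idempotent_of_boundedNilpotent_charP
    (p : ℕ) (hp : p.Prime) (A : Type*) [CommRing A]
    (hpA : (p : A) = 0) (hA : IsFrobeniusSeparated p A)
    (𝔞 : Ideal A) (hidem : 𝔞 = 𝔞 ^ 2)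
    (m : ℕ) (hm : 1 ≤ m) (hbd : ∀ x ∈ 𝔞, x ^ m = 0) :
    𝔞 = ⊥ :=
  ideal_eq_bot_of_idempotent_of_boundedNilpotent_charP_general p hp A hA 𝔞 hidem m hbd
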